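/- arXiv:0903.1340 — 6 statements merged into one kernel-verified Lean document; each statement's English description precedes it below -/
import Mathlib

section
/- The function ξ(x) = H((1-√(1-x²))/2, (1+√(1-x²))/2), where H(p,q) = -p·log p - q·log q is the binary entropy, is strictly convex on the interval [-1, 1]. -/
/-- Binary Shannon entropy of a two-point distribution `(p, q)`. -/
noncomputable def binEnt (p q : ℝ) : ℝ := -(p * Real.log p) - q * Real.log q

/-- ξ(x) = H((1-√(1-x²))/2, (1+√(1-x²))/2). -/
noncomputable def xiFn (x : ℝ) : ℝ :=
  binEnt ((1 - Real.sqrt (1 - x ^ 2)) / 2) ((1 + Real.sqrt (1 - x ^ 2)) / 2)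

/-!
Write `s = √(1 - x²)`. Then `ξ x = binEntropy ((1 - s) / 2)`, and since
`log ((1 + s) / (1 - s)) = 2 artanh s`, the chain rule gives `ξ' x = x artanh s / s` for `x ≠ 0`.
This derivative is odd, and on `(0, 1)` its own derivative is `(artanh s - s) / s³ > 0`,
so `ξ'` is strictly increasing on `(-1, 1)`, which together with continuity on `[-1, 1]` gives
strict convexity.
-/

open Real Set

theorem deriv_zero_of_even {𝕜 F : Type*} [NontriviallyNormedField 𝕜] [NormedAddCommGroup F]
    [NormedSpace 𝕜 F] [IsAddTorsionFree F] {f : 𝕜 → F} (hf : Function.Even f) :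
    deriv f 0 = 0 := by
  have h := deriv_comp_neg (f := f) (x := 0)
  rw [funext hf, neg_zero] at h
  exact self_eq_neg.mp h

theorem strictMonoOn_Ioo_of_odd {G H : Type*} [AddCommGroup G] [LinearOrder G]
    [IsOrderedAddMonoid G] [AddCommGroup H] [PartialOrder H] [IsOrderedAddMonoid H]
    {f : G → H} {a : G} (ha : 0 < a) (hodd : Function.Odd f)
    (hf : StrictMonoOn f (Ico 0 a)) : StrictMonoOn f (Ioo (-a) a) := by
  have hneg : StrictMonoOn f (Ioc (-a) 0) := fun x hx y hy hxy => by
    rw [← neg_lt_neg_iff, ← hodd, ← hodd]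
    exact hf ⟨neg_nonneg.2 hy.2, neg_lt.1 hy.1⟩ ⟨neg_nonneg.2 hx.2, neg_lt.1 hx.1⟩
      (neg_lt_neg hxy)
  rw [← Ioc_union_Ico_eq_Ioo (neg_lt_zero.2 ha) ha]
  exact hneg.union hf ⟨⟨neg_lt_zero.2 ha, le_rfl⟩, fun x hx => hx.2⟩
    ⟨⟨le_rfl, ha⟩, fun x hx => hx.1⟩

namespace Real

theorem hasDerivAt_artanh {x : ℝ} (hx : x ∈ Ioo (-1) 1) :
    HasDerivAt artanh (1 - x ^ 2)⁻¹ x := by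
  have hpos : 0 < 1 + x := by linarith [hx.1]
  have hneg : 0 < 1 - x := by linarith [hx.2]
  have hsq : 0 < 1 - x ^ 2 := by nlinarith
  have hlog : HasDerivAt (fun t => (log (1 + t) - log (1 - t)) / 2)
      ((1 / (1 + x) - -1 / (1 - x)) / 2) x :=
    ((((hasDerivAt_id' x).const_add 1).log hpos.ne').sub
      (((hasDerivAt_id' x).const_sub 1).log hneg.ne')).div_const 2
  refine (hlog.congr_of_eventuallyEq ?_).congr_deriv ?_
  · filter_upwards [isOpen_Ioo.mem_nhds hx] with t ht
    rw [artanh_eq_half_log (Ioo_subset_Icc_self ht),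
      log_div (by linarith [ht.1]) (by linarith [ht.2])]
    ring
  · field_simp
    ring

theorem lt_artanh {x : ℝ} (hx : x ∈ Ioo 0 1) : x < artanh x := by
  have hsum := hasSum_log_sub_log_of_abs_lt_one (abs_lt.2 ⟨by linarith [hx.1], hx.2⟩)
  have h := sum_le_hasSum (Finset.range 2) (fun k _ => by have := hx.1; positivity) hsum
  rw [artanh_eq_half_log (Ioo_subset_Icc_self ⟨by linarith [hx.1], hx.2⟩),
    log_div (by linarith [hx.1]) (by linarith [hx.2])]
  simp only [Finset.sum_range_succ, Finset.sum_range_zero] at h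
  norm_num at h
  nlinarith [pow_pos hx.1 3]

end Real

theorem sqrt_one_sub_sq_mem_Ioo {x : ℝ} (hx : x ∈ Ioo (-1) 1) (hx0 : x ≠ 0) :
    √(1 - x ^ 2) ∈ Ioo 0 1 := by
  have hx2 : 0 < x ^ 2 := by positivity
  have hx1 : x ^ 2 < 1 := by nlinarith [hx.1, hx.2]
  exact ⟨sqrt_pos.2 (by linarith), (sqrt_lt' one_pos).2 (by linarith)⟩

theorem hasDerivAt_sqrt_one_sub_sq {x : ℝ} (hx : x ∈ Ioo (-1) 1) :
    HasDerivAt (fun x => √(1 - x ^ 2)) (-x / √(1 - x ^ 2)) x := by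
  have hpos : 0 < 1 - x ^ 2 := by nlinarith [hx.1, hx.2]
  convert ((hasDerivAt_pow 2 x).const_sub 1).sqrt hpos.ne' using 1
  field_simp
  ring

theorem binEnt_one_sub (p : ℝ) : binEnt p (1 - p) = binEntropy p := by
  simp only [binEnt, binEntropy_eq_negMulLog_add_negMulLog_one_sub, negMulLog]
  ring

theorem xiFn_eq_binEntropy (x : ℝ) : xiFn x = binEntropy ((1 - √(1 - x ^ 2)) / 2) := by
  rw [xiFn, ← binEnt_one_sub]
  ring_nf

theorem xiFn_neg (x : ℝ) : xiFn (-x) = xiFn x := by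
  simp only [xiFn, neg_sq]

theorem continuous_xiFn : Continuous xiFn := by
  rw [funext xiFn_eq_binEntropy]
  fun_prop

noncomputable def xiDeriv (x : ℝ) : ℝ := x * artanh √(1 - x ^ 2) / √(1 - x ^ 2)

theorem xiDeriv_neg (x : ℝ) : xiDeriv (-x) = -xiDeriv x := by
  simp only [xiDeriv, neg_sq]
  ring

theorem hasDerivAt_xiFn {x : ℝ} (hx : x ∈ Ioo (-1) 1) (hx0 : x ≠ 0) :
    HasDerivAt xiFn (xiDeriv x) x := by
  obtain ⟨hs0, hs1⟩ := sqrt_one_sub_sq_mem_Ioo hx hx0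
  set s := √(1 - x ^ 2)
  have hent := hasDerivAt_binEntropy (p := (1 - s) / 2) (by linarith) (by linarith)
  have hlog : log (1 - (1 - s) / 2) - log ((1 - s) / 2) = 2 * artanh s := by
    rw [artanh_eq_half_log ⟨by linarith, hs1.le⟩, show 1 - (1 - s) / 2 = (1 + s) / 2 by ring,
      log_div (x := 1 + s) (y := 1 - s) (by linarith) (by linarith),
      log_div (by linarith) two_ne_zero, log_div (by linarith) two_ne_zero]
    ring
  rw [funext xiFn_eq_binEntropy]
  refine (hent.comp x (((hasDerivAt_sqrt_one_sub_sq hx).const_sub 1).div_const 2)).congr_deriv ?_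
  rw [hlog, xiDeriv]
  field_simp
  rfl

/-- At `0` the chain rule is unavailable (`binEntropy` is not differentiable at `0`); evenness
gives `deriv xiFn 0 = 0` without deciding whether `ξ` is differentiable there. -/
theorem deriv_xiFn {x : ℝ} (hx : x ∈ Ioo (-1) 1) : deriv xiFn x = xiDeriv x := by
  rcases eq_or_ne x 0 with rfl | hx0
  · simp [deriv_zero_of_even xiFn_neg, xiDeriv]
  · exact (hasDerivAt_xiFn hx hx0).deriv

theorem hasDerivAt_xiDeriv {x : ℝ} (hx : x ∈ Ioo 0 1) :
    HasDerivAt xiDeriv ((artanh √(1 - x ^ 2) - √(1 - x ^ 2)) / √(1 - x ^ 2) ^ 3) x := by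
  have hx' : x ∈ Ioo (-1) 1 := ⟨by linarith [hx.1], hx.2⟩
  have hs := sqrt_one_sub_sq_mem_Ioo hx' hx.1.ne'
  have hsq : √(1 - x ^ 2) ^ 2 = 1 - x ^ 2 := sq_sqrt (by nlinarith [hx.1, hx.2])
  have hds := hasDerivAt_sqrt_one_sub_sq hx'
  have hart := (hasDerivAt_artanh ⟨by linarith [hs.1], hs.2⟩).comp x hds
  show HasDerivAt (fun y => y * artanh √(1 - y ^ 2) / √(1 - y ^ 2)) _ x
  refine (((hasDerivAt_id' x).fun_mul hart).fun_div hds hs.1.ne').congr_deriv ?_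
  simp only [Function.comp_apply]
  generalize √(1 - x ^ 2) = s at hs hsq ⊢
  have hs0 : s ≠ 0 := hs.1.ne'
  have : 1 - s ^ 2 ≠ 0 := by nlinarith [hs.1, hs.2]
  have hx2 : x ^ 2 = 1 - s ^ 2 := by linarith
  field_simp
  rw [hx2]
  ring

theorem xiDeriv_pos {x : ℝ} (hx : x ∈ Ioo 0 1) : 0 < xiDeriv x := by
  obtain ⟨hs0, hs1⟩ := sqrt_one_sub_sq_mem_Ioo ⟨by linarith [hx.1], hx.2⟩ hx.1.ne'
  have := artanh_pos ⟨hs0, hs1⟩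
  have := hx.1
  unfold xiDeriv
  positivity

theorem strictMonoOn_xiDeriv_Ico : StrictMonoOn xiDeriv (Ico 0 1) := by
  have hIoo : StrictMonoOn xiDeriv (Ioo 0 1) := by
    refine strictMonoOn_of_deriv_pos (convex_Ioo 0 1)
      (fun x hx => (hasDerivAt_xiDeriv hx).continuousAt.continuousWithinAt) fun x hx => ?_
    rw [interior_Ioo] at hx
    obtain ⟨hs0, hs1⟩ := sqrt_one_sub_sq_mem_Ioo ⟨by linarith [hx.1], hx.2⟩ hx.1.ne'
    rw [(hasDerivAt_xiDeriv hx).deriv]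
    exact div_pos (sub_pos.2 (lt_artanh ⟨hs0, hs1⟩)) (by positivity)
  intro x hx y hy hxy
  rcases hx.1.eq_or_lt with rfl | hx0
  · simpa [xiDeriv] using xiDeriv_pos ⟨hxy, hy.2⟩
  · exact hIoo ⟨hx0, hx.2⟩ ⟨hx0.trans hxy, hy.2⟩ hxy

/-- The function ξ is strictly convex on [-1, 1]. -/
theorem xi_strictConvexOn : StrictConvexOn ℝ (Set.Icc (-1 : ℝ) 1) xiFn := by
  refine StrictMonoOn.strictConvexOn_of_deriv (convex_Icc _ _) continuous_xiFn.continuousOn ?_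
  rw [interior_Icc]
  exact (strictMonoOn_Ioo_of_odd one_pos xiDeriv_neg strictMonoOn_xiDeriv_Ico).congr
    fun x hx => (deriv_xiFn hx).symm
end

section
/- Let g be a continuous real-valued function on a compact set P of extreme points of a compact convex set Ω in a finite-dimensional real vector space, with Ω the convex hull of P. Then the largest convex extension G of g to Ω, G(ρ) = inf{ Σ pⱼ g(πⱼ) : ρ = Σ pⱼ πⱼ, πⱼ ∈ P, pⱼ ≥ 0, Σ pⱼ = 1 }, attains the infimum for every ρ ∈ Ω, i.e., G is a roof. -/
/-!
A number `t` is the value of a convex decomposition of `ρ` exactly when `(ρ, t)` lies in the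
convex hull of the graph of `g` over `P`. By Carathéodory's theorem the convex hull of a compact
set in finite dimension is a finite union of continuous images of compact sets, hence compact.
Since the graph of `g` is compact, the set of decomposition values of `ρ` is a compact slice of
this hull, nonempty as soon as `ρ ∈ convexHull P`, so it contains its infimum.
-/

open scoped BigOperators

/-- The set of values `Σ pⱼ g(πⱼ)` over finite convex decompositions of `ρ`
    into elements of `P`. -/
def decompVals {E : Type*} [AddCommGroup E] [Module ℝ E]
    (P : Set E) (g : E → ℝ) (ρ : E) : Set ℝ :=
  {t : ℝ | ∃ (k : ℕ) (p : Fin k → ℝ) (π : Fin k → E),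
    (∀ j, 0 ≤ p j) ∧ (∑ j, p j = 1) ∧ (∀ j, π j ∈ P) ∧
    ρ = ∑ j, p j • π j ∧ t = ∑ j, p j * g (π j)}

open Set Module

section ConvexHull

variable {𝕜 E : Type*} [Field 𝕜] [LinearOrder 𝕜] [IsStrictOrderedRing 𝕜]
  [AddCommGroup E] [Module 𝕜 E] {s : Set E} {x : E}

theorem mem_convexHull_iff_exists_fin :
    x ∈ convexHull 𝕜 s ↔ ∃ (k : ℕ) (w : Fin k → 𝕜) (z : Fin k → E),
      (∀ i, 0 ≤ w i) ∧ ∑ i, w i = 1 ∧ (∀ i, z i ∈ s) ∧ ∑ i, w i • z i = x := by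
  rw [mem_convexHull_iff_exists_fintype]
  constructor
  · rintro ⟨ι, _, w, z, hw₀, hw₁, hz, hx⟩
    let e := (Fintype.equivFin ι).symm
    refine ⟨_, fun i => w (e i), fun i => z (e i), fun i => hw₀ _, ?_, fun i => hz _, ?_⟩
    · rwa [e.sum_comp w]
    · rwa [e.sum_comp fun i => w i • z i]
  · rintro ⟨k, w, z, h⟩
    exact ⟨Fin k, inferInstance, w, z, h⟩

theorem exists_fin_le_finrank_succ_of_mem_convexHull [FiniteDimensional 𝕜 E]
    (hx : x ∈ convexHull 𝕜 s) :
    ∃ k ≤ finrank 𝕜 E + 1, ∃ (w : Fin k → 𝕜) (z : Fin k → E),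
      (∀ i, 0 ≤ w i) ∧ ∑ i, w i = 1 ∧ (∀ i, z i ∈ s) ∧ ∑ i, w i • z i = x := by
  obtain ⟨ι, _, z, w, hzs, hz, hw₀, hw₁, hx⟩ := eq_pos_convex_span_of_mem_convexHull hx
  have hcard : Fintype.card ι ≤ finrank 𝕜 E + 1 :=
    hz.card_le_finrank_succ.trans (Nat.succ_le_succ (Submodule.finrank_le _))
  let e := (Fintype.equivFin ι).symm
  refine ⟨_, hcard, fun i => w (e i), fun i => z (e i), fun i => (hw₀ _).le, ?_,
    fun i => hzs (mem_range_self _), ?_⟩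
  · rwa [e.sum_comp w]
  · rwa [e.sum_comp fun i => w i • z i]

theorem convexHull_eq_iUnion_image_stdSimplex [FiniteDimensional 𝕜 E] (s : Set E) :
    convexHull 𝕜 s = ⋃ k : Fin (finrank 𝕜 E + 2),
      (fun x : (Fin k → 𝕜) × (Fin k → E) => ∑ i, x.1 i • x.2 i) ''
        (stdSimplex 𝕜 (Fin k) ×ˢ univ.pi fun _ => s) := by
  ext x
  simp only [mem_iUnion, mem_image, mem_prod, mem_univ_pi, Prod.exists]
  constructor
  · intro hx
    obtain ⟨k, hk, w, z, hw₀, hw₁, hz, rfl⟩ := exists_fin_le_finrank_succ_of_mem_convexHull hx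
    exact ⟨⟨k, Nat.lt_succ_of_le hk⟩, w, z, ⟨⟨hw₀, hw₁⟩, hz⟩, rfl⟩
  · rintro ⟨k, w, z, ⟨⟨hw₀, hw₁⟩, hz⟩, rfl⟩
    exact mem_convexHull_iff_exists_fin.2 ⟨k, w, z, hw₀, hw₁, hz, rfl⟩

theorem IsCompact.convexHull [TopologicalSpace 𝕜] [OrderClosedTopology 𝕜] [CompactIccSpace 𝕜]
    [ContinuousAdd 𝕜] [TopologicalSpace E] [ContinuousAdd E] [ContinuousSMul 𝕜 E]
    [FiniteDimensional 𝕜 E] (hs : IsCompact s) : IsCompact (convexHull 𝕜 s) := by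
  rw [convexHull_eq_iUnion_image_stdSimplex]
  exact isCompact_iUnion fun k =>
    ((isCompact_stdSimplex 𝕜 _).prod (isCompact_univ_pi fun _ => hs)).image (by fun_prop)

end ConvexHull

theorem IsCompact.preimage_prodMk_left {X Y : Type*} [TopologicalSpace X] [T1Space X]
    [TopologicalSpace Y] {C : Set (X × Y)} (hC : IsCompact C) (x : X) :
    IsCompact (Prod.mk x ⁻¹' C) := by
  have hslice : Prod.mk x ⁻¹' C = Prod.snd '' (C ∩ Prod.fst ⁻¹' {x}) := by
    ext y
    simp
  rw [hslice]
  exact (hC.inter_right (isClosed_singleton.preimage continuous_fst)).image continuous_snd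

section DecompVals

variable {E : Type*} [AddCommGroup E] [Module ℝ E] {P : Set E} {g : E → ℝ} {ρ : E}

theorem mem_decompVals_iff {t : ℝ} :
    t ∈ decompVals P g ρ ↔ (ρ, t) ∈ convexHull ℝ (P.graphOn g) := by
  rw [mem_convexHull_iff_exists_fin]
  constructor
  · rintro ⟨k, p, π, hp₀, hp₁, hπ, rfl, rfl⟩
    refine ⟨k, p, fun j => (π j, g (π j)), hp₀, hp₁, fun j => ⟨π j, hπ j, rfl⟩, ?_⟩
    ext <;> simp [Prod.fst_sum, Prod.snd_sum]
  · rintro ⟨k, p, z, hp₀, hp₁, hz, hsum⟩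
    simp only [mem_graphOn] at hz
    refine ⟨k, p, fun j => (z j).1, hp₀, hp₁, fun j => (hz j).1, ?_, ?_⟩
    · simpa [Prod.fst_sum] using congrArg Prod.fst hsum.symm
    · simpa [Prod.snd_sum, (hz _).2] using congrArg Prod.snd hsum.symm

theorem decompVals_eq_preimage_convexHull_graphOn :
    decompVals P g ρ = Prod.mk ρ ⁻¹' convexHull ℝ (P.graphOn g) :=
  Set.ext fun _ => mem_decompVals_iff

theorem decompVals_nonempty (hρ : ρ ∈ convexHull ℝ P) : (decompVals P g ρ).Nonempty := by
  rw [← image_fst_graphOn g P, ← LinearMap.coe_fst (R := ℝ) (M₂ := ℝ),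
    ← LinearMap.image_convexHull] at hρ
  obtain ⟨⟨_, t⟩, ht, rfl⟩ := hρ
  exact ⟨t, mem_decompVals_iff.2 ht⟩

end DecompVals

theorem convex_roof_attained_general {E : Type*} [NormedAddCommGroup E] [NormedSpace ℝ E]
    [FiniteDimensional ℝ E]
    (P Ω : Set E) (g : E → ℝ)
    (hPcomp : IsCompact P) (hg : ContinuousOn g P)
    (hΩ : Ω = convexHull ℝ P)
    (ρ : E) (hρ : ρ ∈ Ω) :
    sInf (decompVals P g ρ) ∈ decompVals P g ρ := by
  have hgraph : IsCompact (P.graphOn g) :=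
    hPcomp.image_of_continuousOn (continuousOn_id.prodMk hg)
  have hne : (decompVals P g ρ).Nonempty := decompVals_nonempty (hΩ ▸ hρ)
  rw [decompVals_eq_preimage_convexHull_graphOn] at hne ⊢
  exact (hgraph.convexHull.preimage_prodMk_left ρ).sInf_mem hne

/-- For a continuous `g` on a compact set `P` of extreme points of a compact
    convex set `Ω = convexHull P` in a finite-dimensional real vector space,
    the largest convex extension `G(ρ) = inf { Σ pⱼ g(πⱼ) }` attains its
    infimum at every `ρ ∈ Ω`: `G` is a roof. -/
theorem convex_roof_attained {E : Type*} [NormedAddCommGroup E] [NormedSpace ℝ E]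
    [FiniteDimensional ℝ E]
    (P Ω : Set E) (g : E → ℝ)
    (hPcomp : IsCompact P) (hg : ContinuousOn g P)
    (hΩ : Ω = convexHull ℝ P) (hΩcomp : IsCompact Ω) (hΩconv : Convex ℝ Ω)
    (hPext : P ⊆ Ω.extremePoints ℝ)
    (ρ : E) (hρ : ρ ∈ Ω) :
    sInf (decompVals P g ρ) ∈ decompVals P g ρ :=
  convex_roof_attained_general P Ω g hPcomp hg hΩ ρ hρ
end

section
/- Let Q₀ be real symmetric 4×4, η = diag(1,-1,-1,-1), and suppose w₁ > w₂ are real numbers such that Q_{w₁} = Q₀ - w₁η and Q_{w₂} = Q₀ - w₂η are both positive semidefinite with nontrivial kernels. Then any nonzero n₁ ∈ Ker Q_{w₁} is timelike (n₁ᵀηn₁ > 0) and any nonzero n₂ ∈ Ker Q_{w₂} is spacelike (n₂ᵀηn₂ < 0). -/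
open Matrix

/-! Write `Q_w = Q₀ - w η`, so `Q_{w₂} = Q_{w₁} + (w₁ - w₂) η`. For `n ∈ Ker Q_{w₁}` the
quadratic form of the positive semidefinite `Q_{w₂}` at `n` is `(w₁ - w₂) nᵀηn ≥ 0`; were it `0`,
`n` would lie in `Ker Q_{w₂}` as well, hence `η n = 0` and `n = 0`. Exchanging the roles of
`w₁` and `w₂` (with `-η` in place of `η`) gives the spacelike half. -/

lemma dotProduct_mulVec_pos_of_mulVec_eq_zero {ι : Type*} [Fintype ι] [DecidableEq ι]
    {M η : Matrix ι ι ℝ} {c : ℝ} (hc : 0 < c) (hη : IsUnit η) (hpsd : (M + c • η).PosSemidef)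
    {v : ι → ℝ} (hv : v ≠ 0) (hMv : M *ᵥ v = 0) : 0 < v ⬝ᵥ η *ᵥ v := by
  have hquad : v ⬝ᵥ (M + c • η) *ᵥ v = c * (v ⬝ᵥ η *ᵥ v) := by
    rw [add_mulVec, hMv, zero_add, smul_mulVec, dotProduct_smul, smul_eq_mul]
  have hform : 0 ≤ c * (v ⬝ᵥ η *ᵥ v) := by
    simpa [hquad] using hpsd.dotProduct_mulVec_nonneg v
  have hnonneg : 0 ≤ v ⬝ᵥ η *ᵥ v := nonneg_of_mul_nonneg_right hform hc
  refine hnonneg.lt_of_ne fun hzero => hv ?_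
  have hker : (M + c • η) *ᵥ v = 0 :=
    (hpsd.dotProduct_mulVec_zero_iff v).mp (by simp [hquad, ← hzero])
  have hηv : η *ᵥ v = 0 := by
    rw [add_mulVec, hMv, zero_add, smul_mulVec] at hker
    exact (smul_eq_zero.mp hker).resolve_left hc.ne'
  exact mulVec_injective_iff_isUnit.mpr hη (hηv.trans (mulVec_zero η).symm)

lemma isUnit_minkowskiMetric : IsUnit (diagonal ![(1 : ℝ), -1, -1, -1]) := by
  simp [isUnit_diagonal, Pi.isUnit_iff, Fin.forall_fin_succ]

theorem kernel_timelike_spacelike_general (Q0 η : Matrix (Fin 4) (Fin 4) ℝ)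
    (hη : η = Matrix.diagonal ![1, -1, -1, -1])
    (w₁ w₂ : ℝ) (hw : w₂ < w₁)
    (h1 : (Q0 - w₁ • η).PosSemidef) (h2 : (Q0 - w₂ • η).PosSemidef)
    (n₁ n₂ : Fin 4 → ℝ) (hn₁ : n₁ ≠ 0) (hn₂ : n₂ ≠ 0)
    (hk1 : (Q0 - w₁ • η).mulVec n₁ = 0) (hk2 : (Q0 - w₂ • η).mulVec n₂ = 0) :
    0 < n₁ ⬝ᵥ η.mulVec n₁ ∧ n₂ ⬝ᵥ η.mulVec n₂ < 0 := by
  have hc : 0 < w₁ - w₂ := sub_pos.mpr hw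
  have hηunit : IsUnit η := hη ▸ isUnit_minkowskiMetric
  constructor
  · refine dotProduct_mulVec_pos_of_mulVec_eq_zero hc hηunit ?_ hn₁ hk1
    convert h2 using 1
    module
  · have hpos := dotProduct_mulVec_pos_of_mulVec_eq_zero hc hηunit.neg ?_ hn₂ hk2
    · simpa [neg_mulVec] using hpos
    convert h1 using 1
    module

/-- If `Q₀ - w₁η` and `Q₀ - w₂η` (w₁ > w₂) are both positive semidefinite with
    nontrivial kernels, then kernel vectors at `w₁` are timelike and kernel
    vectors at `w₂` are spacelike. -/
theorem kernel_timelike_spacelike (Q0 η : Matrix (Fin 4) (Fin 4) ℝ)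
    (hsym : Q0.IsSymm)
    (hη : η = Matrix.diagonal ![1, -1, -1, -1])
    (w₁ w₂ : ℝ) (hw : w₂ < w₁)
    (h1 : (Q0 - w₁ • η).PosSemidef) (h2 : (Q0 - w₂ • η).PosSemidef)
    (n₁ n₂ : Fin 4 → ℝ) (hn₁ : n₁ ≠ 0) (hn₂ : n₂ ≠ 0)
    (hk1 : (Q0 - w₁ • η).mulVec n₁ = 0) (hk2 : (Q0 - w₂ • η).mulVec n₂ = 0) :
    0 < n₁ ⬝ᵥ η.mulVec n₁ ∧ n₂ ⬝ᵥ η.mulVec n₂ < 0 :=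
  kernel_timelike_spacelike_general Q0 η hη w₁ w₂ hw h1 h2 n₁ n₂ hn₁ hn₂ hk1 hk2
end

section
/- For the bistochastic 1-qubit map Φ defined on the Bloch-vector representation by (x₀, x₁, x₂, x₃) ↦ (x₀, λ₁x₁, λ₂x₂, λ₃x₃), with w = max(λ₁², λ₂², λ₃²) and |λᵢ| ≤ 1, the quadratic form q(x) = (1-w)x₀² + Σᵢ(w - λᵢ²)xᵢ² is positive semidefinite, agrees with 4·det(Φ(ρ)) on the set of pure states (x₀ = 1, x₁²+x₂²+x₃² = 1), and its square root √q is constant along the coordinate direction achieving the maximum, hence √q restricted to the Bloch ball is a flat convex roof. -/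
/-!
Write `q` as the diagonal form `∑ cᵢ xᵢ²` with weights `c = (1 - w, w - λ₁², w - λ₂², w - λ₃²)`.
Since `w` is the largest `λᵢ²` and `|λᵢ| ≤ 1`, all weights are nonnegative, and the weight of the
maximising coordinate vanishes, so `q` ignores that coordinate. On pure states `∑ xᵢ² = x₀²`, so the
`w`-terms cancel and `q = 4 det Φ(ρ)`. Finally `√q` is the Euclidean norm of `x ↦ (√cᵢ xᵢ)ᵢ`, a
seminorm, hence convex.
-/

open Finset

theorem Fin.max_three_eq_sup' {α : Type*} [LinearOrder α] (f : Fin 3 → α) :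
    max (f 0) (max (f 1) (f 2)) = univ.sup' univ_nonempty f :=
  rfl

section DiagonalForm

variable {ι : Type*} [Fintype ι]

theorem sum_mul_sq_add_smul_single [DecidableEq ι] {c : ι → ℝ} {j : ι} (hj : c j = 0)
    (x : ι → ℝ) (t : ℝ) :
    ∑ i, c i * (x + t • (Pi.single j 1 : ι → ℝ)) i ^ 2 = ∑ i, c i * x i ^ 2 := by
  refine sum_congr rfl fun i _ => ?_
  obtain rfl | hij := eq_or_ne i j
  · simp [hj]
  · simp [hij]

theorem convexOn_sqrt_sum_mul_sq {c : ι → ℝ} (hc : ∀ i, 0 ≤ c i) :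
    ConvexOn ℝ Set.univ fun x : ι → ℝ => √(∑ i, c i * x i ^ 2) := by
  let L : (ι → ℝ) →ₗ[ℝ] EuclideanSpace ℝ ι :=
    (WithLp.linearEquiv 2 ℝ (ι → ℝ)).symm.toLinearMap ∘ₗ
      LinearMap.pi fun i => √(c i) • LinearMap.proj i
  have hL : ∀ x, √(∑ i, c i * x i ^ 2) = ‖L x‖ := fun x => by
    simp [L, EuclideanSpace.norm_eq, mul_pow, Real.sq_sqrt (hc _)]
  have h := (convexOn_norm (E := EuclideanSpace ℝ ι) convex_univ).comp_linearMap L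
  rw [Set.preimage_univ] at h
  exact funext hL ▸ h

end DiagonalForm

def blochWeights (l : Fin 3 → ℝ) (w : ℝ) : Fin 4 → ℝ :=
  Fin.cons (1 - w) fun i => w - l i ^ 2

theorem blochWeights_nonneg {l : Fin 3 → ℝ} {w : ℝ} (hl : ∀ i, l i ^ 2 ≤ w) (hw : w ≤ 1) :
    ∀ i, 0 ≤ blochWeights l w i :=
  Fin.cases (sub_nonneg.2 hw) fun i => sub_nonneg.2 (hl i)

theorem convex_blochBall :
    Convex ℝ {x : Fin 4 → ℝ | x 0 = 1 ∧ x 1 ^ 2 + x 2 ^ 2 + x 3 ^ 2 ≤ 1} := by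
  let π : Fin 4 → (Fin 4 → ℝ) →ₗ[ℝ] ℝ := LinearMap.proj
  have hsq : ConvexOn ℝ Set.univ fun x : Fin 4 → ℝ => x 1 ^ 2 + x 2 ^ 2 + x 3 ^ 2 := by
    have h i := (even_two.convexOn_pow (𝕜 := ℝ)).comp_linearMap (π i)
    exact ((h 1).add (h 2)).add (h 3)
  have h := (convex_hyperplane (π 0).isLinear 1).inter (hsq.convex_le 1)
  simp only [Set.mem_univ, true_and] at h
  exact h

/-- For the bistochastic qubit map `x ↦ (x₀, λ₁x₁, λ₂x₂, λ₃x₃)` with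
    `w = max λᵢ²`, the quadratic form
    `q(x) = (1-w)x₀² + Σ (w-λᵢ²)xᵢ²` is positive semidefinite, agrees with
    `4·det Φ(ρ) = x₀² - Σ λᵢ²xᵢ²` on pure states, is constant along the
    coordinate direction achieving the maximum, and `√q` is convex on the
    Bloch ball: a flat convex roof. -/
theorem bistochastic_concurrence (l : Fin 3 → ℝ) (hl : ∀ i, |l i| ≤ 1)
    (w : ℝ) (hw : w = max ((l 0) ^ 2) (max ((l 1) ^ 2) ((l 2) ^ 2)))
    (q : (Fin 4 → ℝ) → ℝ)
    (hq : q = fun x => (1 - w) * (x 0) ^ 2 + (w - (l 0) ^ 2) * (x 1) ^ 2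
      + (w - (l 1) ^ 2) * (x 2) ^ 2 + (w - (l 2) ^ 2) * (x 3) ^ 2) :
    (∀ x, 0 ≤ q x) ∧
    (∀ x : Fin 4 → ℝ, x 0 = 1 → (x 1) ^ 2 + (x 2) ^ 2 + (x 3) ^ 2 = 1 →
      q x = (x 0) ^ 2 - (l 0) ^ 2 * (x 1) ^ 2 - (l 1) ^ 2 * (x 2) ^ 2
        - (l 2) ^ 2 * (x 3) ^ 2) ∧
    (∃ i : Fin 3, w = (l i) ^ 2 ∧
      ∀ (x : Fin 4 → ℝ) (t : ℝ), q (x + t • (Pi.single i.succ 1 : Fin 4 → ℝ)) = q x) ∧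
    ConvexOn ℝ {x : Fin 4 → ℝ | x 0 = 1 ∧ (x 1) ^ 2 + (x 2) ^ 2 + (x 3) ^ 2 ≤ 1}
      (fun x => Real.sqrt (q x)) := by
  rw [Fin.max_three_eq_sup' fun i => l i ^ 2] at hw
  have hle : ∀ i, l i ^ 2 ≤ w := fun i => hw ▸ le_sup' (fun i => l i ^ 2) (mem_univ i)
  have hw1 : w ≤ 1 := hw ▸ sup'_le _ _ fun i _ => (sq_le_one_iff_abs_le_one _).2 (hl i)
  have hq' : q = fun x => ∑ i, blochWeights l w i * x i ^ 2 := by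
    subst hq
    funext x
    rw [Fin.sum_univ_four]
    rfl
  have hc := blochWeights_nonneg hle hw1
  obtain ⟨j, -, hj⟩ := exists_mem_eq_sup' univ_nonempty fun i => l i ^ 2
  refine ⟨fun x => hq' ▸ sum_nonneg fun i _ => mul_nonneg (hc i) (sq_nonneg _), ?_, ?_, ?_⟩
  · intro x hx0 hxs
    subst hq
    linear_combination w * hxs - w * (x 0 + 1) * hx0
  · refine ⟨j, hw.trans hj, fun x t => hq' ▸ sum_mul_sq_add_smul_single ?_ x t⟩
    simp [blochWeights, hw.trans hj]
  · exact hq' ▸ (convexOn_sqrt_sum_mul_sq hc).subset (Set.subset_univ _) convex_blochBall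
end

section
/- For the axially symmetric map with parameters α, γ ∈ [0,1], at the critical value β_c² = 1 + 2αγ - α - γ - 2√(α(1-α)γ(1-γ)), the function ρ ↦ 2√(det Φ(ρ) - β_c² det ρ) is affine on the Bloch ball: on pure states (1, x⃗), |x⃗| = 1, it equals (√(α(1-α)) - √(γ(1-γ)))·x₃ + √(α(1-α)) + √(γ(1-γ)). -/
/-! The `x₁`, `x₂` terms cancel, so the left-hand side is the binary quadratic form
`x₀² - β (x₀² - x₃²) - ((α + γ - 1)x₃ + (α - γ)x₀)²` in `(x₀, x₃)`. With `a = √(α(1-α))` and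
`g = √(γ(1-γ))` one has `√(α(1-α)γ(1-γ)) = ag`, and at `β = β_c²` the coefficients of that form are
exactly those of `((a - g)x₃ + (a + g)x₀)²`; e.g. `a² - g² = (α - γ)(1 - α - γ)`. -/

lemma sqrt_mul_self_one_sub {α : ℝ} (hα : α ∈ Set.Icc (0 : ℝ) 1) :
    Real.sqrt (α * (1 - α)) ^ 2 = α * (1 - α) :=
  Real.sq_sqrt (mul_nonneg hα.1 (sub_nonneg.2 hα.2))

lemma sqrt_mul_one_sub_mul_mul_one_sub {α : ℝ} (hα : α ∈ Set.Icc (0 : ℝ) 1) (γ : ℝ) :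
    Real.sqrt (α * (1 - α) * γ * (1 - γ)) = Real.sqrt (α * (1 - α)) * Real.sqrt (γ * (1 - γ)) := by
  rw [← Real.sqrt_mul (mul_nonneg hα.1 (sub_nonneg.2 hα.2)), mul_assoc (α * (1 - α))]

lemma critical_binary_form_eq_sq {α γ a g : ℝ} (ha : a ^ 2 = α * (1 - α)) (hg : g ^ 2 = γ * (1 - γ))
    (x0 x3 : ℝ) :
    x0 ^ 2 - (1 + 2 * α * γ - α - γ - 2 * a * g) * (x0 ^ 2 - x3 ^ 2)
        - ((α + γ - 1) * x3 + (α - γ) * x0) ^ 2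
      = ((a - g) * x3 + (a + g) * x0) ^ 2 := by
  have h00 : 1 - (1 + 2 * α * γ - α - γ - 2 * a * g) - (α - γ) ^ 2 = (a + g) ^ 2 := by
    linear_combination -ha - hg
  have h33 : (1 + 2 * α * γ - α - γ - 2 * a * g) - (α + γ - 1) ^ 2 = (a - g) ^ 2 := by
    linear_combination -ha - hg
  have h03 : -(α + γ - 1) * (α - γ) = a ^ 2 - g ^ 2 := by
    linear_combination -ha + hg
  linear_combination x0 ^ 2 * h00 + x3 ^ 2 * h33 + 2 * x0 * x3 * h03

theorem axial_critical_affine_general (α γ : ℝ)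
    (hα : α ∈ Set.Icc (0 : ℝ) 1) (hγ : γ ∈ Set.Icc (0 : ℝ) 1)
    (a g βc2 : ℝ)
    (ha : a = Real.sqrt (α * (1 - α))) (hg : g = Real.sqrt (γ * (1 - γ)))
    (hβ : βc2 = 1 + 2 * α * γ - α - γ - 2 * Real.sqrt (α * (1 - α) * γ * (1 - γ)))
    (x0 x1 x2 x3 : ℝ) :
    x0 ^ 2 - βc2 * x1 ^ 2 - βc2 * x2 ^ 2 - ((α + γ - 1) * x3 + (α - γ) * x0) ^ 2
      - βc2 * (x0 ^ 2 - x1 ^ 2 - x2 ^ 2 - x3 ^ 2)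
    = ((a - g) * x3 + (a + g) * x0) ^ 2 := by
  have ha2 : a ^ 2 = α * (1 - α) := ha ▸ sqrt_mul_self_one_sub hα
  have hg2 : g ^ 2 = γ * (1 - γ) := hg ▸ sqrt_mul_self_one_sub hγ
  have hβag : βc2 = 1 + 2 * α * γ - α - γ - 2 * a * g := by
    rw [hβ, sqrt_mul_one_sub_mul_mul_one_sub hα, ← ha, ← hg]
    ring
  subst hβag
  linear_combination critical_binary_form_eq_sq ha2 hg2 x0 x3

/-- At the critical value β_c² = 1 + 2αγ - α - γ - 2√(α(1-α)γ(1-γ)), on pure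
    states (x₀² = x₁²+x₂²+x₃²) the quantity 4(det Φ(x) - β_c² det x) is the
    square of the affine function (√(α(1-α)) - √(γ(1-γ)))x₃ + (√(α(1-α)) +
    √(γ(1-γ)))x₀. -/
theorem axial_critical_affine (α γ : ℝ)
    (hα : α ∈ Set.Icc (0 : ℝ) 1) (hγ : γ ∈ Set.Icc (0 : ℝ) 1)
    (a g βc2 : ℝ)
    (ha : a = Real.sqrt (α * (1 - α))) (hg : g = Real.sqrt (γ * (1 - γ)))
    (hβ : βc2 = 1 + 2 * α * γ - α - γ - 2 * Real.sqrt (α * (1 - α) * γ * (1 - γ)))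
    (x0 x1 x2 x3 : ℝ) (hpure : x0 ^ 2 = x1 ^ 2 + x2 ^ 2 + x3 ^ 2) :
    x0 ^ 2 - βc2 * x1 ^ 2 - βc2 * x2 ^ 2 - ((α + γ - 1) * x3 + (α - γ) * x0) ^ 2
      - βc2 * (x0 ^ 2 - x1 ^ 2 - x2 ^ 2 - x3 ^ 2)
    = ((a - g) * x3 + (a + g) * x0) ^ 2 :=
  axial_critical_affine_general α γ hα hγ a g βc2 ha hg hβ x0 x1 x2 x3
end

section
/- Let Φ be a trace-preserving positive linear map from 2×2 Hermitian matrices to 2×2 Hermitian matrices and let w₀ ∈ ℝ be such that q(ρ) = 4(det Φ(ρ) - w₀·det ρ) is a positive semidefinite quadratic form on the 4-dimensional real space of Hermitian matrices with nontrivial kernel containing a vector n with n·n ≤ 0 in the Minkowski sense. Then C(ρ) = √(q(ρ)) restricted to the Bloch ball satisfies: C(π) = 2√(det Φ(π)) for all pure states π, C is convex, and for every density matrix ρ there exists a convex decomposition ρ = Σ pⱼπⱼ into pure states with C(ρ) = Σ pⱼ C(πⱼ). -/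
open scoped BigOperators

/-- The determinant of a Hermitian 2×2 matrix in Bloch (Minkowski) coordinates:
    det ρ = (1/4)(x₀² - x₁² - x₂² - x₃²). -/
noncomputable def mdet (x : Fin 4 → ℝ) : ℝ :=
  (1 / 4) * ((x 0) ^ 2 - (x 1) ^ 2 - (x 2) ^ 2 - (x 3) ^ 2)

/-!
The form `q` is positive semidefinite, so `√q` is a seminorm (Cauchy–Schwarz) and hence convex;
on pure states `det ρ = 0`, so `q = 4 det Φ`. Being positively homogeneous and invariant under
translation by `n`, `√q` is linear on the half-plane `{a • x + b • n | a ≥ 0}`. This half-plane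
meets the slice `x₀ = 1` in a line or ray through `x` whose only possible endpoint, `n / n₀`, is
not timelike and so lies outside the open Bloch ball. Hence the chord of the ball through `x` in
direction `n - n₀ • x` stays in the half-plane, its endpoints are pure states, and `√q` is affine
along it.
-/

namespace QuadraticMap

variable {V : Type*} [AddCommGroup V] [Module ℝ V] (Q : QuadraticForm ℝ V)

theorem map_add_smul (x y : V) (t : ℝ) :
    Q (x + t • y) = Q x + t * polar Q x y + t ^ 2 * Q y := by
  have h := polar_smul_right Q t x y
  rw [polar, Q.map_smul, smul_eq_mul, smul_eq_mul] at h
  linear_combination h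

theorem polar_sq_le_of_nonneg (hQ : ∀ x, 0 ≤ Q x) (x y : V) :
    polar Q x y ^ 2 ≤ 4 * Q x * Q y := by
  have h := discrim_le_zero (a := Q y) (b := polar Q x y) (c := Q x) fun t => by
    have := hQ (x + t • y)
    rw [map_add_smul] at this
    linarith
  rw [discrim] at h
  linarith

theorem sqrt_map_add_le (hQ : ∀ x, 0 ≤ Q x) (x y : V) :
    √(Q (x + y)) ≤ √(Q x) + √(Q y) := by
  have hx := Real.sq_sqrt (hQ x)
  have hy := Real.sq_sqrt (hQ y)
  have hpolar : polar Q x y ≤ 2 * √(Q x) * √(Q y) :=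
    (abs_le_of_sq_le_sq' (by nlinarith [polar_sq_le_of_nonneg Q hQ x y]) (by positivity)).2
  rw [Real.sqrt_le_left (by positivity), QuadraticMap.map_add Q x y]
  nlinarith

theorem sqrt_map_smul (a : ℝ) (x : V) : √(Q (a • x)) = |a| * √(Q x) := by
  rw [Q.map_smul, smul_eq_mul, Real.sqrt_mul (mul_self_nonneg a), Real.sqrt_mul_self_eq_abs]

noncomputable def sqrtSeminorm (hQ : ∀ x, 0 ≤ Q x) : Seminorm ℝ V :=
  Seminorm.of (fun x => √(Q x)) (sqrt_map_add_le Q hQ) (sqrt_map_smul Q)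

theorem sqrt_map_smul_add_smul_of_invariant {n : V} (hker : ∀ x (t : ℝ), Q (x + t • n) = Q x)
    {a : ℝ} (ha : 0 ≤ a) (b : ℝ) (x : V) : √(Q (a • x + b • n)) = a * √(Q x) := by
  rw [hker, sqrt_map_smul, abs_of_nonneg ha]

end QuadraticMap

theorem exists_roots_quadratic_of_neg_of_pos {a b c : ℝ} (ha : a < 0) (hc : 0 < c) :
    ∃ r₁ r₂ : ℝ, r₂ < 0 ∧ 0 < r₁ ∧ ∀ t, a * t ^ 2 + b * t + c = a * (t - r₁) * (t - r₂) := by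
  have hD : 0 ≤ b ^ 2 - 4 * a * c := by nlinarith
  set s := √(b ^ 2 - 4 * a * c)
  have hs : s ^ 2 = b ^ 2 - 4 * a * c := Real.sq_sqrt hD
  have hbs : |b| < s := by
    rw [← Real.sqrt_sq_eq_abs]
    exact Real.sqrt_lt_sqrt (sq_nonneg b) (by nlinarith)
  obtain ⟨hb₁, hb₂⟩ := abs_lt.1 hbs
  refine ⟨(-b - s) / (2 * a), (-b + s) / (2 * a), div_neg_of_pos_of_neg (by linarith) (by linarith),
    div_pos_of_neg_of_neg (by linarith) (by linarith), fun t => ?_⟩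
  have ha0 : a ≠ 0 := ha.ne
  field_simp
  linear_combination hs

noncomputable def mdetForm : QuadraticForm ℝ (Fin 4 → ℝ) :=
  QuadraticMap.weightedSumSquares ℝ (![1 / 4, -1 / 4, -1 / 4, -1 / 4] : Fin 4 → ℝ)

@[simp]
theorem mdetForm_apply (x : Fin 4 → ℝ) : mdetForm x = mdet x := by
  simp [mdetForm, Fin.sum_univ_four, mdet]
  ring

theorem mdet_smul (a : ℝ) (x : Fin 4 → ℝ) : mdet (a • x) = a ^ 2 * mdet x := by
  rw [← mdetForm_apply, QuadraticMap.map_smul, mdetForm_apply, smul_eq_mul, sq]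

def IsPureState (x : Fin 4 → ℝ) : Prop :=
  x 0 = 1 ∧ x 1 ^ 2 + x 2 ^ 2 + x 3 ^ 2 = 1

def blochBall : Set (Fin 4 → ℝ) :=
  {x | x 0 = 1 ∧ x 1 ^ 2 + x 2 ^ 2 + x 3 ^ 2 ≤ 1}

theorem isPureState_iff {x : Fin 4 → ℝ} : IsPureState x ↔ x 0 = 1 ∧ mdet x = 0 := by
  refine and_congr_right fun h0 => ?_
  rw [mdet, h0]
  constructor <;> intro h <;> linarith

theorem convex_blochBall_s18 : Convex ℝ blochBall := by
  rintro u ⟨hu0, hu⟩ v ⟨hv0, hv⟩ a b ha hb hab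
  simp only [blochBall, Set.mem_ofPred_eq, Pi.add_apply, Pi.smul_apply, smul_eq_mul, hu0, hv0]
  refine ⟨by linarith, ?_⟩
  have hspread : 0 ≤ a * b * ((u 1 - v 1) ^ 2 + (u 2 - v 2) ^ 2 + (u 3 - v 3) ^ 2) := by
    positivity
  nlinarith [mul_le_mul_of_nonneg_left hu ha, mul_le_mul_of_nonneg_left hv hb]

theorem mdet_pos_of_mem_blochBall {x : Fin 4 → ℝ} (hx : x ∈ blochBall) (hpure : ¬IsPureState x) :
    0 < mdet x := by
  obtain ⟨h0, h⟩ := hx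
  have hlt : x 1 ^ 2 + x 2 ^ 2 + x 3 ^ 2 < 1 := lt_of_le_of_ne h fun h' => hpure ⟨h0, h'⟩
  rw [mdet, h0]
  linarith

theorem mdet_neg_of_apply_zero_eq_zero {d : Fin 4 → ℝ} (hd0 : d 0 = 0) (hd : d ≠ 0) :
    mdet d < 0 := by
  rw [mdet, hd0]
  by_contra! h
  refine hd (funext fun i => ?_)
  fin_cases i
  · exact hd0
  all_goals
    simp only [Fin.reduceFinMk, Fin.isValue, Pi.zero_apply]
    nlinarith [sq_nonneg (d 1), sq_nonneg (d 2), sq_nonneg (d 3)]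

theorem ne_smul_of_mdet_nonpos {x n : Fin 4 → ℝ} (hx : 0 < mdet x) (hn : n ≠ 0)
    (hnn : mdet n ≤ 0) (c : ℝ) : n ≠ c • x := by
  rintro rfl
  rw [mdet_smul] at hnn
  have hc : c = 0 := pow_eq_zero_iff two_ne_zero |>.1 (by nlinarith [sq_nonneg c])
  exact hn (by rw [hc, zero_smul])

theorem exists_pure_states_on_line {x n : Fin 4 → ℝ} (hx0 : x 0 = 1) (hx : 0 < mdet x)
    (hn : n ≠ 0) (hnn : mdet n ≤ 0) :
    ∃ r₁ r₂ : ℝ, r₂ < 0 ∧ 0 < r₁ ∧ ∀ r ∈ ({r₁, r₂} : Set ℝ),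
      0 ≤ 1 - r * n 0 ∧ IsPureState ((1 - r * n 0) • x + r • n) := by
  set c := n 0
  set d := n - c • x
  have hline : ∀ r : ℝ, (1 - r * c) • x + r • n = x + r • d := fun r => by
    simp only [d]
    module
  have hd0 : d 0 = 0 := by simp [d, c, hx0]
  have hd : d ≠ 0 := sub_ne_zero.2 (ne_smul_of_mdet_nonpos hx hn hnn c)
  obtain ⟨r₁, r₂, hr₂, hr₁, hfactor⟩ := exists_roots_quadratic_of_neg_of_pos
    (b := QuadraticMap.polar mdetForm x d) (mdet_neg_of_apply_zero_eq_zero hd0 hd) hx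
  have hmdet : ∀ r, mdet (x + r • d) = mdet d * (r - r₁) * (r - r₂) := fun r => by
    rw [← hfactor, ← mdetForm_apply, QuadraticMap.map_add_smul]
    simp only [mdetForm_apply]
    ring
  have hweight : ∀ r, r₂ ≤ r → r ≤ r₁ → 0 ≤ 1 - r * c := by
    intro r h₂ h₁
    by_contra! hneg
    have hc : c ≠ 0 := by
      rintro hc
      norm_num [hc] at hneg
    have hcinv := mul_inv_cancel₀ hc
    -- otherwise the non-timelike point `c⁻¹ • n` would lie strictly inside the chord
    have hbetween : r₂ < c⁻¹ ∧ c⁻¹ < r₁ := by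
      rcases hc.lt_or_gt with hc | hc <;> constructor <;> nlinarith
    have hpos : 0 < mdet (x + c⁻¹ • d) := by
      rw [hmdet]
      exact mul_pos (mul_pos_of_neg_of_neg (mdet_neg_of_apply_zero_eq_zero hd0 hd)
        (by linarith)) (by linarith)
    rw [← hline, inv_mul_cancel₀ hc, sub_self, zero_smul, zero_add, mdet_smul] at hpos
    nlinarith [sq_nonneg c⁻¹]
  refine ⟨r₁, r₂, hr₂, hr₁, ?_⟩
  rintro r (rfl | rfl)
  all_goals
    refine ⟨hweight _ (by linarith) (by linarith), isPureState_iff.2 ⟨by simp [hx0, c], ?_⟩⟩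
    rw [hline, hmdet]
    ring

theorem exists_pure_decomposition_of_mem_blochBall (Q : QuadraticForm ℝ (Fin 4 → ℝ))
    {n : Fin 4 → ℝ} (hn : n ≠ 0) (hnn : mdet n ≤ 0) (hker : ∀ x (t : ℝ), Q (x + t • n) = Q x)
    {x : Fin 4 → ℝ} (hx : x ∈ blochBall) :
    ∃ (p : ℝ) (π₁ π₂ : Fin 4 → ℝ), 0 ≤ p ∧ p ≤ 1 ∧ IsPureState π₁ ∧ IsPureState π₂ ∧
      x = p • π₁ + (1 - p) • π₂ ∧ √(Q x) = p * √(Q π₁) + (1 - p) * √(Q π₂) := by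
  by_cases hpure : IsPureState x
  · exact ⟨1, x, x, zero_le_one, le_rfl, hpure, hpure, by simp, by simp⟩
  obtain ⟨r₁, r₂, hr₂, hr₁, hr⟩ :=
    exists_pure_states_on_line hx.1 (mdet_pos_of_mem_blochBall hx hpure) hn hnn
  obtain ⟨hw₁, hπ₁⟩ := hr r₁ (by simp)
  obtain ⟨hw₂, hπ₂⟩ := hr r₂ (by simp)
  have hgap : r₁ - r₂ ≠ 0 := by linarith
  obtain ⟨p, hp⟩ : ∃ p, p = -r₂ / (r₁ - r₂) := ⟨_, rfl⟩
  have hbalance : p * r₁ + (1 - p) * r₂ = 0 := by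
    rw [hp]
    field_simp
    ring
  refine ⟨p, _, _, hp ▸ div_nonneg (by linarith) (by linarith),
    hp ▸ (div_le_one (by linarith)).2 (by linarith), hπ₁, hπ₂, ?_, ?_⟩
  · match_scalars
    · linear_combination n 0 * hbalance
    · linear_combination -hbalance
  · rw [Q.sqrt_map_smul_add_smul_of_invariant hker hw₁,
      Q.sqrt_map_smul_add_smul_of_invariant hker hw₂]
    linear_combination (n 0 * √(Q x)) * hbalance

noncomputable def concurrenceForm (L : (Fin 4 → ℝ) →ₗ[ℝ] (Fin 4 → ℝ)) (w₀ : ℝ) :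
    QuadraticForm ℝ (Fin 4 → ℝ) :=
  (4 : ℝ) • (mdetForm.comp L - w₀ • mdetForm)

theorem concurrenceForm_apply (L : (Fin 4 → ℝ) →ₗ[ℝ] (Fin 4 → ℝ)) (w₀ : ℝ) (x : Fin 4 → ℝ) :
    concurrenceForm L w₀ x = 4 * (mdet (L x) - w₀ * mdet x) := by
  simp [concurrenceForm]

theorem stochastic_qubit_concurrence_general
    (L : (Fin 4 → ℝ) →ₗ[ℝ] (Fin 4 → ℝ))
    (w₀ : ℝ) (q : (Fin 4 → ℝ) → ℝ)
    (hq : q = fun x => 4 * (mdet (L x) - w₀ * mdet x))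
    (hqpos : ∀ x, 0 ≤ q x)
    (n : Fin 4 → ℝ) (hn : n ≠ 0)
    (hker : ∀ (x : Fin 4 → ℝ) (t : ℝ), q (x + t • n) = q x)
    (hnn : (n 0) ^ 2 - (n 1) ^ 2 - (n 2) ^ 2 - (n 3) ^ 2 ≤ 0) :
    (∀ x : Fin 4 → ℝ, x 0 = 1 → (x 1) ^ 2 + (x 2) ^ 2 + (x 3) ^ 2 = 1 →
      Real.sqrt (q x) = 2 * Real.sqrt (mdet (L x))) ∧
    ConvexOn ℝ {x : Fin 4 → ℝ | x 0 = 1 ∧ (x 1) ^ 2 + (x 2) ^ 2 + (x 3) ^ 2 ≤ 1}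
      (fun x => Real.sqrt (q x)) ∧
    (∀ x : Fin 4 → ℝ, x 0 = 1 → (x 1) ^ 2 + (x 2) ^ 2 + (x 3) ^ 2 ≤ 1 →
      ∃ (k : ℕ) (p : Fin k → ℝ) (π : Fin k → (Fin 4 → ℝ)),
        (∀ j, 0 ≤ p j) ∧ (∑ j, p j = 1) ∧
        (∀ j, (π j) 0 = 1 ∧ ((π j) 1) ^ 2 + ((π j) 2) ^ 2 + ((π j) 3) ^ 2 = 1) ∧
        x = ∑ j, p j • π j ∧
        Real.sqrt (q x) = ∑ j, p j * Real.sqrt (q (π j))) := by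
  obtain ⟨Q, rfl⟩ : ∃ Q : QuadraticForm ℝ (Fin 4 → ℝ), q = Q :=
    ⟨concurrenceForm L w₀, hq.trans (funext (concurrenceForm_apply L w₀)).symm⟩
  have hmdet_n : mdet n ≤ 0 := by
    rw [mdet]
    linarith
  refine ⟨fun x hx0 hx => ?_, ?_, fun x hx0 hx => ?_⟩
  · rw [hq]
    dsimp only
    rw [(isPureState_iff.1 ⟨hx0, hx⟩).2, mul_zero, sub_zero,
      Real.sqrt_mul zero_le_four, show (4 : ℝ) = 2 ^ 2 by norm_num, Real.sqrt_sq zero_le_two]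
  · exact (Q.sqrtSeminorm hqpos).convexOn.subset (Set.subset_univ _) convex_blochBall_s18
  · obtain ⟨p, π₁, π₂, hp₀, hp₁, hπ₁, hπ₂, hsum, hsqrt⟩ :=
      exists_pure_decomposition_of_mem_blochBall Q hn hmdet_n hker ⟨hx0, hx⟩
    refine ⟨2, ![p, 1 - p], ![π₁, π₂], ?_, by simp, ?_, by simpa using hsum, by simpa using hsqrt⟩
    · intro j
      fin_cases j <;> simp [hp₀, hp₁]
    · intro j
      fin_cases j
      exacts [hπ₁, hπ₂]

/-- Let `L` be a trace-preserving positive linear map on qubit observables (in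
    Bloch coordinates) and let `w₀` be such that `q(x) = 4(det L(x) - w₀ det x)`
    is a positive semidefinite quadratic form whose kernel contains a vector `n`
    with `n·n ≤ 0` in the Minkowski sense. Then `C = √q` restricted to the Bloch
    ball equals `2√(det L(π))` on pure states, is convex, and every state admits
    an optimal convex decomposition into pure states on which `C` is convexly
    linear: `C` is the convex roof of the concurrence. -/
theorem stochastic_qubit_concurrence
    (L : (Fin 4 → ℝ) →ₗ[ℝ] (Fin 4 → ℝ))
    (htp : ∀ x, (L x) 0 = x 0)
    (hpos : ∀ x, 0 ≤ x 0 → 0 ≤ mdet x → 0 ≤ (L x) 0 ∧ 0 ≤ mdet (L x))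
    (w₀ : ℝ) (q : (Fin 4 → ℝ) → ℝ)
    (hq : q = fun x => 4 * (mdet (L x) - w₀ * mdet x))
    (hqpos : ∀ x, 0 ≤ q x)
    (n : Fin 4 → ℝ) (hn : n ≠ 0)
    (hker : ∀ (x : Fin 4 → ℝ) (t : ℝ), q (x + t • n) = q x)
    (hnn : (n 0) ^ 2 - (n 1) ^ 2 - (n 2) ^ 2 - (n 3) ^ 2 ≤ 0) :
    (∀ x : Fin 4 → ℝ, x 0 = 1 → (x 1) ^ 2 + (x 2) ^ 2 + (x 3) ^ 2 = 1 →
      Real.sqrt (q x) = 2 * Real.sqrt (mdet (L x))) ∧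
    ConvexOn ℝ {x : Fin 4 → ℝ | x 0 = 1 ∧ (x 1) ^ 2 + (x 2) ^ 2 + (x 3) ^ 2 ≤ 1}
      (fun x => Real.sqrt (q x)) ∧
    (∀ x : Fin 4 → ℝ, x 0 = 1 → (x 1) ^ 2 + (x 2) ^ 2 + (x 3) ^ 2 ≤ 1 →
      ∃ (k : ℕ) (p : Fin k → ℝ) (π : Fin k → (Fin 4 → ℝ)),
        (∀ j, 0 ≤ p j) ∧ (∑ j, p j = 1) ∧
        (∀ j, (π j) 0 = 1 ∧ ((π j) 1) ^ 2 + ((π j) 2) ^ 2 + ((π j) 3) ^ 2 = 1) ∧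
        x = ∑ j, p j • π j ∧
        Real.sqrt (q x) = ∑ j, p j * Real.sqrt (q (π j))) :=
  stochastic_qubit_concurrence_general L w₀ q hq hqpos n hn hker hnn
end
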